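/- Let 𝔽 be a field with a set of positive elements 𝔽⁺, N a finite set, ∂N ⊆ N, and P a Dirichlet form over 𝔽 on N. Suppose every ψ : ∂N → 𝔽 admits a realizable extension with respect to P, and let Q be a Dirichlet form over 𝔽 on ∂N such that Q(ψ) = P(φ) whenever φ is a realizable extension of ψ. Then for all ψ : ∂N → 𝔽 and ι : ∂N → 𝔽, the following are equivalent: (1) there exists φ : N → 𝔽 agreeing with ψ on ∂N such that dP_φ(δ_n) = 0 for every n ∈ N∖∂N and dP_φ(δ_n) = ι(n) for every n ∈ ∂N; (2) ι(b) = dQ_ψ(δ_b) for every b ∈ ∂N (where δ_b : ∂N → 𝔽 is the indicator of b). In other words, the image of the graph of dP under the symplectification of the inclusion ∂N → N equals the graph of dQ. -/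
import Mathlib


open Finset

/-- The formal derivative `df_φ(χ) = f(φ + χ) - f(φ) - f(χ)`. -/
def formalDeriv {F S : Type*} [Field F] (f : (S → F) → F) (φ χ : S → F) : F :=
  f (φ + χ) - f φ - f χ

/-- The indicator function `δ_n` of a point `n`. -/
def delta {F S : Type*} [Field F] [DecidableEq S] (n : S) : S → F :=
  fun m => if m = n then 1 else 0

/-- A Dirichlet form over `F` (with positive elements `Fpos`) on a finite set `S`. -/
def IsDirichletOver {F S : Type*} [Field F] [Fintype S] (Fpos : Set F)
    (Q : (S → F) → F) : Prop :=
  ∃ c : S → S → F, (∀ i j, c i j ∈ Fpos ∪ {0}) ∧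
    ∀ ψ : S → F, Q ψ = ∑ i, ∑ j, c i j * (ψ i - ψ j) ^ 2

/-- `φ` is a realizable extension of `ψ : B → F` with respect to `P`. -/
def RealizableExt {F S : Type*} [Field F] [Fintype S] [DecidableEq S]
    (P : (S → F) → F) (B : Finset S) (ψ : B → F) (φ : S → F) : Prop :=
  (∀ x : B, φ x = ψ x) ∧ ∀ x ∉ B, formalDeriv P φ (delta x) = 0

lemma st12_deriv_eq {F S : Type*} [Field F] [Fintype S]
    (c : S → S → F) (P : (S → F) → F)
    (hc : ∀ ψ : S → F, P ψ = ∑ i, ∑ j, c i j * (ψ i - ψ j) ^ 2)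
    (φ χ : S → F) :
    formalDeriv P φ χ = ∑ i, ∑ j, c i j * (2 * (φ i - φ j) * (χ i - χ j)) := by
  simp only [formalDeriv, hc, ← Finset.sum_sub_distrib]
  refine Finset.sum_congr rfl fun i _ => Finset.sum_congr rfl fun j _ => ?_
  simp only [Pi.add_apply]; ring

lemma st12_deriv_decomp {F S : Type*} [Field F] [Fintype S] [DecidableEq S]
    (c : S → S → F) (P : (S → F) → F)
    (hc : ∀ ψ : S → F, P ψ = ∑ i, ∑ j, c i j * (ψ i - ψ j) ^ 2)
    (φ χ : S → F) :
    formalDeriv P φ χ = ∑ n, χ n * formalDeriv P φ (delta n) := by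
  simp only [st12_deriv_eq c P hc, Finset.mul_sum]
  symm
  rw [Finset.sum_comm]
  refine Finset.sum_congr rfl fun i _ => ?_
  rw [Finset.sum_comm]
  refine Finset.sum_congr rfl fun j _ => ?_
  have hsum : ∑ n, χ n * (delta n i - delta n j) = χ i - χ j := by
    simp only [delta, mul_sub, Finset.sum_sub_distrib, mul_ite, mul_one, mul_zero,
      Finset.sum_ite_eq, Finset.mem_univ, if_true]
  calc ∑ x, χ x * (c i j * (2 * (φ i - φ j) * (delta x i - delta x j)))
      = c i j * (2 * (φ i - φ j) * ∑ x, χ x * (delta x i - delta x j)) := by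
        rw [Finset.mul_sum, Finset.mul_sum]
        exact Finset.sum_congr rfl fun n _ => by ring
    _ = c i j * (2 * (φ i - φ j) * (χ i - χ j)) := by rw [hsum]

lemma st12_deriv_add_left {F S : Type*} [Field F] [Fintype S]
    (c : S → S → F) (P : (S → F) → F)
    (hc : ∀ ψ : S → F, P ψ = ∑ i, ∑ j, c i j * (ψ i - ψ j) ^ 2)
    (φ φ' χ : S → F) :
    formalDeriv P (φ + φ') χ = formalDeriv P φ χ + formalDeriv P φ' χ := by
  simp only [st12_deriv_eq c P hc, ← Finset.sum_add_distrib]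
  refine Finset.sum_congr rfl fun i _ => Finset.sum_congr rfl fun j _ => ?_
  simp only [Pi.add_apply]; ring

lemma st12_key {F N : Type*} [Field F] [Fintype N] [DecidableEq N]
    (B : Finset N) (P : (N → F) → F) (c : N → N → F)
    (hc : ∀ ψ : N → F, P ψ = ∑ i, ∑ j, c i j * (ψ i - ψ j) ^ 2)
    (hexist : ∀ ψ : B → F, ∃ φ : N → F, RealizableExt P B ψ φ)
    (Q : (B → F) → F)
    (hQ : ∀ (ψ : B → F) (φ : N → F), RealizableExt P B ψ φ → Q ψ = P φ)
    (ψ : B → F) (φ : N → F) (hφ : RealizableExt P B ψ φ) (b : B) :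
    formalDeriv Q ψ (delta b) = formalDeriv P φ (delta (b : N)) := by
  obtain ⟨φ₀, hφ₀⟩ := hexist (delta b)
  have hsum : RealizableExt P B (ψ + delta b) (φ + φ₀) := by
    constructor
    · intro x; simp [hφ.1 x, hφ₀.1 x]
    · intro x hx
      rw [st12_deriv_add_left c P hc, hφ.2 x hx, hφ₀.2 x hx, add_zero]
  have e1 : formalDeriv Q ψ (delta b) = formalDeriv P φ φ₀ := by
    rw [formalDeriv, formalDeriv, hQ _ _ hsum, hQ _ _ hφ, hQ _ _ hφ₀]
  rw [e1, st12_deriv_decomp c P hc φ φ₀, st12_deriv_decomp c P hc φ (delta (b : N))]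
  refine Finset.sum_congr rfl fun n _ => ?_
  by_cases hn : n ∈ B
  · congr 1
    rw [hφ₀.1 ⟨n, hn⟩]
    simp only [delta, Subtype.ext_iff]
  · rw [hφ.2 n hn, mul_zero, mul_zero]

/-- Let `P` be a Dirichlet form over `F` on `N`, with every boundary
potential admitting a realizable extension, and let `Q` be a Dirichlet form on `∂N` with
`Q ψ = P φ` for every realizable extension `φ` of `ψ`.  Then for boundary potentials `ψ`
and boundary currents `ι`, there is a potential `φ` extending `ψ` whose formal derivative
vanishes at nonterminals and equals `ι` at terminals, if and only if
`ι b = dQ_ψ(δ_b)` for every terminal `b`; i.e. the image of the graph of `dP` under the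
symplectification of the inclusion `∂N → N` equals the graph of `dQ`. -/
theorem statement12 {F N : Type*} [Field F] [Fintype N] [DecidableEq N]
    (Fpos : Set F) (h0 : (0 : F) ∉ Fpos)
    (hadd : ∀ x ∈ Fpos, ∀ y ∈ Fpos, x + y ∈ Fpos)
    (hmul : ∀ x ∈ Fpos, ∀ y ∈ Fpos, x * y ∈ Fpos)
    (hdiv : ∀ x ∈ Fpos, ∀ y ∈ Fpos, x / y ∈ Fpos)
    (B : Finset N) (P : (N → F) → F) (hP : IsDirichletOver Fpos P)
    (hexist : ∀ ψ : B → F, ∃ φ : N → F, RealizableExt P B ψ φ)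
    (Q : (B → F) → F) (hQdir : IsDirichletOver Fpos Q)
    (hQ : ∀ (ψ : B → F) (φ : N → F), RealizableExt P B ψ φ → Q ψ = P φ)
    (ψ ι : B → F) :
    (∃ φ : N → F, (∀ b : B, φ b = ψ b) ∧
        (∀ n ∉ B, formalDeriv P φ (delta n) = 0) ∧
        ∀ b : B, formalDeriv P φ (delta (b : N)) = ι b) ↔
      ∀ b : B, ι b = formalDeriv Q ψ (delta b) := by
  obtain ⟨c, -, hc⟩ := hP
  constructor
  · rintro ⟨φ, h1, h2, h3⟩ b
    rw [st12_key B P c hc hexist Q hQ ψ φ ⟨h1, h2⟩ b]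
    exact (h3 b).symm
  · intro h
    obtain ⟨φ, hφ⟩ := hexist ψ
    exact ⟨φ, hφ.1, hφ.2, fun b => by
      rw [← st12_key B P c hc hexist Q hQ ψ φ hφ b]; exact (h b).symm⟩
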